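/- Puncturing preserves the MMCD property: assume n_i ≤ m_i for all i and m_1 ≥ … ≥ m_ℓ. Let 𝒞 ⊆ Π be a linear MMCD code with d = d_MC(𝒞) > 1, and let δ, j be the unique integers with d − 1 = Σ_{i=1}^{j−1} n_i + δ and 0 ≤ δ ≤ n_j − 1. Let 1 ≤ k ≤ j, and if k = j assume δ > 0. Let X = (X_i,Y_i)_{i=1}^ℓ be the multi-cover with X_i = ∅ for all i, Y_i = ∅ for i ≠ k, and |Y_k| = 1. Then the punctured code 𝒞_X (a linear code in ∏_{i=1}^ℓ 𝔽_q^{m_i × n′_i} where n′_k = n_k − 1 and n′_i = n_i otherwise) is MMCD with dim(𝒞_X) = dim(𝒞) and d_MC(𝒞_X) = d − 1. -/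

import Mathlib

open Finset

/-- The space `∏_{i=1}^ℓ 𝔽_q^{m_i × n_i}` of `ℓ`-tuples of matrices over `F`. -/
abbrev MCSpace (F : Type*) {ℓ : ℕ} (m n : Fin ℓ → ℕ) : Type _ :=
  (i : Fin ℓ) → Matrix (Fin (m i)) (Fin (n i)) F

section Defs

variable {F : Type*} [Field F] [Fintype F] {ℓ : ℕ} {m n : Fin ℓ → ℕ}

/-- `(X, Y)` is a multi-cover of the tuple of matrices `C`: every nonzero entry of `C i`
lies in a row indexed by `X i` or a column indexed by `Y i`. -/
def IsMultiCover (X : (i : Fin ℓ) → Finset (Fin (m i))) (Y : (i : Fin ℓ) → Finset (Fin (n i)))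
    (C : MCSpace F m n) : Prop :=
  ∀ i a b, C i a b ≠ 0 → a ∈ X i ∨ b ∈ Y i

/-- The size `Σ_i (|X_i| + |Y_i|)` of a multi-cover. -/
def mcSize {ℓ : ℕ} {m n : Fin ℓ → ℕ} (X : (i : Fin ℓ) → Finset (Fin (m i)))
    (Y : (i : Fin ℓ) → Finset (Fin (n i))) : ℕ :=
  ∑ i, ((X i).card + (Y i).card)

/-- The multi-cover weight: the minimum size of a multi-cover of `C`. -/
noncomputable def wtMC (C : MCSpace F m n) : ℕ :=
  sInf {r | ∃ X Y, IsMultiCover X Y C ∧ mcSize X Y = r}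

/-- The minimum multi-cover distance of a code. -/
noncomputable def dMC (𝒞 : Set (MCSpace F m n)) : ℕ :=
  sInf {r | ∃ C ∈ 𝒞, ∃ D ∈ 𝒞, C ≠ D ∧ wtMC (C - D) = r}

/-- The column Hamming weight: the number of nonzero columns among the matrices `C i`. -/
noncomputable def wtHC (C : MCSpace F m n) : ℕ :=
  ∑ i, Set.ncard {b : Fin (n i) | ∃ a, C i a b ≠ 0}

/-- The minimum column Hamming distance of a code. -/
noncomputable def dHC (𝒞 : Set (MCSpace F m n)) : ℕ :=
  sInf {r | ∃ C ∈ 𝒞, ∃ D ∈ 𝒞, C ≠ D ∧ wtHC (C - D) = r}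

/-- The projection `π_X` removing, in each block `i`, the rows indexed by `X i` and the
columns indexed by `Y i` (the remaining rows and columns are re-indexed in order). -/
noncomputable def projMC (X : (i : Fin ℓ) → Finset (Fin (m i)))
    (Y : (i : Fin ℓ) → Finset (Fin (n i))) (C : MCSpace F m n) :
    MCSpace F (fun i => m i - (X i).card) (fun i => n i - (Y i).card) :=
  fun i a b =>
    C i ((X i)ᶜ.orderIsoOfFin (by simp [Finset.card_compl]) a)
        ((Y i)ᶜ.orderIsoOfFin (by simp [Finset.card_compl]) b)

/-- The projection `π_X` as a linear map. -/
noncomputable def projMCLin (X : (i : Fin ℓ) → Finset (Fin (m i)))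
    (Y : (i : Fin ℓ) → Finset (Fin (n i))) :
    MCSpace F m n →ₗ[F] MCSpace F (fun i => m i - (X i).card) (fun i => n i - (Y i).card) where
  toFun := projMC X Y
  map_add' _ _ := rfl
  map_smul' _ _ := rfl

/-- The punctured code `𝒞_X = π_X(𝒞)`. -/
noncomputable def punctureMC (𝒞 : Submodule F (MCSpace F m n))
    (X : (i : Fin ℓ) → Finset (Fin (m i))) (Y : (i : Fin ℓ) → Finset (Fin (n i))) :
    Submodule F (MCSpace F (fun i => m i - (X i).card) (fun i => n i - (Y i).card)) :=
  Submodule.map (projMCLin X Y) 𝒞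

/-- The subspace of tuples vanishing on all entries covered by `(X, Y)`. -/
def zeroOnMC (X : (i : Fin ℓ) → Finset (Fin (m i))) (Y : (i : Fin ℓ) → Finset (Fin (n i))) :
    Submodule F (MCSpace F m n) where
  carrier := {C | ∀ i a b, (a ∈ X i ∨ b ∈ Y i) → C i a b = 0}
  zero_mem' := by intro i a b _; rfl
  add_mem' := by
    intro C D hC hD i a b hab
    show C i a b + D i a b = 0
    rw [hC i a b hab, hD i a b hab, add_zero]
  smul_mem' := by
    intro c C hC i a b hab
    show c * C i a b = 0
    rw [hC i a b hab, mul_zero]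

/-- The shortened code `𝒞^X`. -/
noncomputable def shortenMC (𝒞 : Submodule F (MCSpace F m n))
    (X : (i : Fin ℓ) → Finset (Fin (m i))) (Y : (i : Fin ℓ) → Finset (Fin (n i))) :
    Submodule F (MCSpace F (fun i => m i - (X i).card) (fun i => n i - (Y i).card)) :=
  Submodule.map (projMCLin X Y) (𝒞 ⊓ zeroOnMC X Y)

/-- The standard (trace / entrywise) inner product on `MCSpace F m n`. -/
def innerMC (C D : MCSpace F m n) : F := ∑ i, ∑ a, ∑ b, C i a b * D i a b

/-- The dual code with respect to the entrywise inner product. -/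
def dualMC (𝒞 : Submodule F (MCSpace F m n)) : Submodule F (MCSpace F m n) where
  carrier := {D | ∀ C ∈ 𝒞, innerMC C D = 0}
  zero_mem' := by intro C _; simp [innerMC]
  add_mem' := by
    intro D E hD hE C hC
    have h1 := hD C hC
    have h2 := hE C hC
    simp only [innerMC] at h1 h2 ⊢
    simp only [Pi.add_apply, Matrix.add_apply, mul_add, Finset.sum_add_distrib, h1, h2, add_zero]
  smul_mem' := by
    intro c D hD C hC
    have h1 := hD C hC
    simp only [innerMC] at h1 ⊢
    simp only [Pi.smul_apply, Matrix.smul_apply, smul_eq_mul, mul_left_comm, ← Finset.mul_sum,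
      h1, mul_zero]

/-- `𝒞` is a maximum multi-cover distance (MMCD) code: it attains the Singleton bound,
where `j` and `δ` are the (unique) integers with `d_MC(𝒞) - 1 = Σ_{i<j} n_i + δ`,
`0 ≤ δ ≤ n_j - 1`. -/
noncomputable def IsMMCD (𝒞 : Set (MCSpace F m n)) : Prop :=
  ∃ (j : Fin ℓ) (δ : ℕ), δ ≤ n j - 1 ∧
    dMC 𝒞 - 1 = (∑ i ∈ Finset.Iio j, n i) + δ ∧
    𝒞.ncard = (Fintype.card F) ^ ((∑ i ∈ Finset.Ici j, m i * n i) - m j * δ)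

/-- The sum-rank weight. -/
noncomputable def wtSR (C : MCSpace F m n) : ℕ := ∑ i, (C i).rank

/-- The minimum sum-rank distance of a code. -/
noncomputable def dSR (𝒞 : Set (MCSpace F m n)) : ℕ :=
  sInf {r | ∃ C ∈ 𝒞, ∃ D ∈ 𝒞, C ≠ D ∧ wtSR (C - D) = r}

/-- The cover weight of a single matrix. -/
noncomputable def coverWt {m n : ℕ} (C : Matrix (Fin m) (Fin n) F) : ℕ :=
  sInf {r | ∃ (X : Finset (Fin m)) (Y : Finset (Fin n)),
    (∀ a b, C a b ≠ 0 → a ∈ X ∨ b ∈ Y) ∧ X.card + Y.card = r}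

end Defs

/-- `S_r^{m,n}`: the number of `m × n` matrices over `F` of cover weight exactly `r`. -/
noncomputable def Scount (F : Type*) [Field F] [Fintype F] (m n r : ℕ) : ℕ :=
  Set.ncard {C : Matrix (Fin m) (Fin n) F | coverWt C = r}


section PunctureHelpers

variable {F : Type*} [Field F] [Fintype F] {ℓ : ℕ} {m n : Fin ℓ → ℕ}

/-- Embedding of `Fin (N - s.card)` into `Fin N` avoiding `s`. -/
noncomputable def cEmb {N : ℕ} (s : Finset (Fin N)) : Fin (N - s.card) → Fin N :=
  fun a => (sᶜ.orderIsoOfFin (by simp [Finset.card_compl]) a : Fin N)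

lemma cEmb_injective {N : ℕ} (s : Finset (Fin N)) : Function.Injective (cEmb s) := by
  intro a b h
  exact (sᶜ.orderIsoOfFin (by simp [Finset.card_compl])).injective (Subtype.ext h)

set_option linter.unusedSectionVars false

lemma cEmb_not_mem {N : ℕ} (s : Finset (Fin N)) (a : Fin (N - s.card)) : cEmb s a ∉ s := by
  have h2 := (sᶜ.orderIsoOfFin (by simp [Finset.card_compl] : sᶜ.card = N - s.card) a).2
  rw [Finset.mem_compl] at h2
  exact h2

lemma cEmb_surj {N : ℕ} (s : Finset (Fin N)) {x : Fin N} (hx : x ∉ s) :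
    ∃ a, cEmb s a = x := by
  refine ⟨(sᶜ.orderIsoOfFin (by simp [Finset.card_compl])).symm ⟨x, Finset.mem_compl.2 hx⟩, ?_⟩
  simp [cEmb]

lemma projMC_apply (X : (i : Fin ℓ) → Finset (Fin (m i))) (Y : (i : Fin ℓ) → Finset (Fin (n i)))
    (C : MCSpace F m n) (i : Fin ℓ) (a : Fin (m i - (X i).card)) (b : Fin (n i - (Y i).card)) :
    projMC X Y C i a b = C i (cEmb (X i) a) (cEmb (Y i) b) := rfl

lemma wtMC_le_of_cover {X : (i : Fin ℓ) → Finset (Fin (m i))}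
    {Y : (i : Fin ℓ) → Finset (Fin (n i))} {C : MCSpace F m n}
    (h : IsMultiCover X Y C) : wtMC C ≤ mcSize X Y :=
  Nat.sInf_le ⟨X, Y, h, rfl⟩

lemma wtMC_mem (C : MCSpace F m n) :
    ∃ X Y, IsMultiCover X Y C ∧ mcSize X Y = wtMC C := by
  have hc : IsMultiCover (fun _ => (Finset.univ : Finset _)) (fun i => (∅ : Finset (Fin (n i)))) C :=
    fun i a _ _ => Or.inl (Finset.mem_univ a)
  have hne : {r | ∃ X Y, IsMultiCover (F := F) (m := m) (n := n) X Y C ∧ mcSize X Y = r}.Nonempty :=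
    ⟨_, Set.mem_setOf.2 ⟨_, _, hc, rfl⟩⟩
  unfold wtMC
  exact Nat.sInf_mem hne

lemma isMultiCover_of_projMC_eq_zero {X : (i : Fin ℓ) → Finset (Fin (m i))}
    {Y : (i : Fin ℓ) → Finset (Fin (n i))} {C : MCSpace F m n}
    (h : projMC X Y C = 0) : IsMultiCover X Y C := by
  intro i a b hab
  by_contra hc
  push_neg at hc
  obtain ⟨a', ha'⟩ := cEmb_surj (X i) hc.1
  obtain ⟨b', hb'⟩ := cEmb_surj (Y i) hc.2
  apply hab
  have h0 := congrFun (congrFun (congrFun h i) a') b'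
  rw [projMC_apply, ha', hb'] at h0
  exact h0

lemma wtMC_le_proj_add (X : (i : Fin ℓ) → Finset (Fin (m i)))
    (Y : (i : Fin ℓ) → Finset (Fin (n i))) (C : MCSpace F m n) :
    wtMC C ≤ wtMC (projMC X Y C) + mcSize X Y := by
  obtain ⟨A, B, hAB, hsize⟩ := wtMC_mem (projMC X Y C)
  have hcov : IsMultiCover (fun i => X i ∪ (A i).image (cEmb (X i)))
      (fun i => Y i ∪ (B i).image (cEmb (Y i))) C := by
    intro i a b hab
    by_cases ha : a ∈ X i
    · exact Or.inl (Finset.mem_union_left _ ha)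
    by_cases hb : b ∈ Y i
    · exact Or.inr (Finset.mem_union_left _ hb)
    obtain ⟨a', ha'⟩ := cEmb_surj (X i) ha
    obtain ⟨b', hb'⟩ := cEmb_surj (Y i) hb
    have hne : projMC X Y C i a' b' ≠ 0 := by rw [projMC_apply, ha', hb']; exact hab
    rcases hAB i a' b' hne with h | h
    · exact Or.inl (Finset.mem_union_right _ (ha' ▸ Finset.mem_image_of_mem _ h))
    · exact Or.inr (Finset.mem_union_right _ (hb' ▸ Finset.mem_image_of_mem _ h))
  have step1 := wtMC_le_of_cover hcov
  refine le_trans step1 (le_trans (Finset.sum_le_sum (g := fun i =>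
      (A i).card + (B i).card + ((X i).card + (Y i).card)) fun i _ => ?_) ?_)
  · dsimp only
    have h1 := Finset.card_union_le (X i) ((A i).image (cEmb (X i)))
    have h2 := Finset.card_union_le (Y i) ((B i).image (cEmb (Y i)))
    have h3 := Finset.card_image_le (s := A i) (f := cEmb (X i))
    have h4 := Finset.card_image_le (s := B i) (f := cEmb (Y i))
    omega
  · rw [← hsize]
    simp [mcSize, Finset.sum_add_distrib]

lemma card_MCSpace (m n : Fin ℓ → ℕ) :
    Fintype.card (MCSpace F m n) = Fintype.card F ^ (∑ i, m i * n i) := by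
  have h : ∀ i, Fintype.card (Matrix (Fin (m i)) (Fin (n i)) F)
      = Fintype.card F ^ (m i * n i) := by
    intro i
    have e : Fintype.card (Matrix (Fin (m i)) (Fin (n i)) F)
        = Fintype.card (Fin (m i) → Fin (n i) → F) := Fintype.card_congr (Equiv.refl _)
    rw [e]; simp [← pow_mul, mul_comm]
  rw [Fintype.card_pi]
  simp_rw [h]
  rw [Finset.prod_pow_eq_pow_sum]

lemma projMC_sub (X : (i : Fin ℓ) → Finset (Fin (m i))) (Y : (i : Fin ℓ) → Finset (Fin (n i)))
    (C D : MCSpace F m n) :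
    projMC X Y (C - D) = projMC X Y C - projMC X Y D :=
  map_sub (projMCLin X Y) C D

lemma sum_Ici_split (j : Fin ℓ) (f : Fin ℓ → ℕ) :
    ∑ i ∈ Finset.Ici j, f i = f j + ∑ i ∈ Finset.Ioi j, f i := by
  rw [← Finset.Ioi_insert j, Finset.sum_insert (by simp)]

lemma sum_split (j : Fin ℓ) (f : Fin ℓ → ℕ) :
    ∑ i, f i = (∑ i ∈ Finset.Iio j, f i) + f j + ∑ i ∈ Finset.Ioi j, f i := by
  have hu : (Finset.univ : Finset (Fin ℓ)) = Finset.Iio j ∪ Finset.Ici j := by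
    ext x; simp [lt_or_ge]
  have hdisj : Disjoint (Finset.Iio j) (Finset.Ici j) := by
    simp only [Finset.disjoint_left, Finset.mem_Iio, Finset.mem_Ici]
    intro a ha; exact not_le.2 ha
  rw [hu, Finset.sum_union hdisj, sum_Ici_split, add_assoc]

end PunctureHelpers

/-- puncturing a linear MMCD code on a single column of a block `k ≤ j`
(with `δ > 0` if `k = j`) yields a linear MMCD code of the same dimension and minimum
multi-cover distance one less. -/
theorem puncture_MMCD {F : Type*} [Field F] [Fintype F] {ℓ : ℕ} {m n : Fin ℓ → ℕ}
    (hm : ∀ i, 0 < m i) (hn : ∀ i, 0 < n i) (hnm : ∀ i, n i ≤ m i)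
    (hmono : ∀ i j : Fin ℓ, i ≤ j → m j ≤ m i)
    (𝒞 : Submodule F (MCSpace F m n)) (h𝒞 : 1 < (𝒞 : Set (MCSpace F m n)).ncard)
    (d : ℕ) (hd : d = dMC (𝒞 : Set (MCSpace F m n))) (hd1 : 1 < d)
    (j : Fin ℓ) (δ : ℕ) (hδ : δ ≤ n j - 1)
    (hdecomp : d - 1 = (∑ i ∈ Finset.Iio j, n i) + δ)
    (hMMCD : (𝒞 : Set (MCSpace F m n)).ncard
      = (Fintype.card F) ^ ((∑ i ∈ Finset.Ici j, m i * n i) - m j * δ))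
    (k : Fin ℓ) (hkj : k ≤ j) (hkδ : k = j → 0 < δ)
    (X : (i : Fin ℓ) → Finset (Fin (m i))) (Y : (i : Fin ℓ) → Finset (Fin (n i)))
    (hX : ∀ i, X i = ∅) (hYk : (Y k).card = 1) (hY : ∀ i, i ≠ k → Y i = ∅) :
    IsMMCD (punctureMC 𝒞 X Y :
        Set (MCSpace F (fun i => m i - (X i).card) (fun i => n i - (Y i).card))) ∧
    Module.finrank F (punctureMC 𝒞 X Y) = Module.finrank F 𝒞 ∧
    dMC (punctureMC 𝒞 X Y :
        Set (MCSpace F (fun i => m i - (X i).card) (fun i => n i - (Y i).card))) = d - 1 := by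
  classical
  have hq : 1 < Fintype.card F := Fintype.one_lt_card
  have hXc : ∀ i, (X i).card = 0 := fun i => by rw [hX i]; simp
  have hYc : ∀ i, (Y i).card = if i = k then 1 else 0 := by
    intro i
    by_cases h : i = k
    · subst h; simp [hYk]
    · simp [h, hY i h]
  have msize : mcSize X Y = 1 := by
    have hterm : ∀ i : Fin ℓ, (X i).card + (Y i).card = if i = k then 1 else 0 := by
      intro i; rw [hXc, hYc]; simp
    simp only [mcSize, hterm]
    simp
  -- injectivity of the projection on 𝒞
  have hπ : ∀ C ∈ 𝒞, ∀ D ∈ 𝒞, projMC X Y C = projMC X Y D → C = D := by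
    intro C hC D hD hCD
    by_contra hne
    have h1 : d ≤ wtMC (C - D) := by
      rw [hd]; exact Nat.sInf_le ⟨C, hC, D, hD, hne, rfl⟩
    have h0 : projMC X Y (C - D) = 0 := by rw [projMC_sub, hCD, sub_self]
    have h2 : wtMC (C - D) ≤ 1 := by
      have := wtMC_le_of_cover (isMultiCover_of_projMC_eq_zero h0)
      rwa [msize] at this
    omega
  have hset : (punctureMC 𝒞 X Y : Set (MCSpace F (fun i => m i - (X i).card) (fun i => n i - (Y i).card))) = projMC X Y '' ((𝒞 : Submodule F (MCSpace F m n)) : Set (MCSpace F m n)) := by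
    have h := Submodule.map_coe (projMCLin (F := F) X Y) 𝒞
    exact h
  have hcard𝒫 : (punctureMC 𝒞 X Y : Set (MCSpace F (fun i => m i - (X i).card) (fun i => n i - (Y i).card))).ncard
      = ((𝒞 : Set (MCSpace F m n))).ncard := by
    rw [hset]
    exact Set.ncard_image_of_injOn (fun C hC D hD h => hπ C hC D hD h)
  have h𝒫2 : 1 < (punctureMC 𝒞 X Y : Set (MCSpace F (fun i => m i - (X i).card) (fun i => n i - (Y i).card))).ncard := by
    rw [hcard𝒫]; exact h𝒞
  obtain ⟨C₁, D₁, hC₁, hD₁, hne₁⟩ := (Set.one_lt_ncard_iff (Set.toFinite _)).1 h𝒫2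
  -- lower bound on elements of the distance-defining set of the punctured code
  have hlowPt : ∀ r, (∃ Ca ∈ (punctureMC 𝒞 X Y : Set (MCSpace F (fun i => m i - (X i).card) (fun i => n i - (Y i).card))),
      ∃ Da ∈ (punctureMC 𝒞 X Y : Set (MCSpace F (fun i => m i - (X i).card) (fun i => n i - (Y i).card))), Ca ≠ Da ∧ wtMC (Ca - Da) = r) →
      d - 1 ≤ r := by
    rintro r ⟨Ca, hCa, Da, hDa, hnea, rfl⟩
    rw [hset] at hCa hDa
    obtain ⟨Cb, hCb, rfl⟩ := hCa
    obtain ⟨Db, hDb, rfl⟩ := hDa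
    have hbne : Cb ≠ Db := fun h => hnea (by rw [h])
    have h1 : d ≤ wtMC (Cb - Db) := by
      rw [hd]; exact Nat.sInf_le ⟨Cb, hCb, Db, hDb, hbne, rfl⟩
    have h2 := wtMC_le_proj_add X Y (Cb - Db)
    rw [projMC_sub, msize] at h2
    omega
  have hS'ne : {r | ∃ Ca ∈ (punctureMC 𝒞 X Y : Set (MCSpace F (fun i => m i - (X i).card) (fun i => n i - (Y i).card))),
      ∃ Da ∈ (punctureMC 𝒞 X Y : Set (MCSpace F (fun i => m i - (X i).card) (fun i => n i - (Y i).card))), Ca ≠ Da ∧ wtMC (Ca - Da) = r}.Nonempty :=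
    ⟨_, Set.mem_setOf.2 ⟨C₁, hC₁, D₁, hD₁, hne₁, rfl⟩⟩
  have hlow : d - 1 ≤ dMC (punctureMC 𝒞 X Y : Set (MCSpace F (fun i => m i - (X i).card) (fun i => n i - (Y i).card))) :=
    hlowPt _ (Nat.sInf_mem hS'ne)
  -- notation for arithmetic
  set S : ℕ := ∑ i ∈ Finset.Ioi j, m i * n i with hS
  have hIci : ∑ i ∈ Finset.Ici j, m i * n i = m j * n j + S := sum_Ici_split j _
  have hδnj : δ + 1 ≤ n j := by have := hn j; omega
  -- upper bound on the punctured distance, by contradiction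
  have hup : dMC (punctureMC 𝒞 X Y : Set (MCSpace F (fun i => m i - (X i).card) (fun i => n i - (Y i).card))) ≤ d - 1 := by
    by_contra hcon
    push_neg at hcon
    set t : ℕ := if k = j then δ else δ + 1 with htdef
    have ht : t ≤ n j - (Y j).card := by
      by_cases h : k = j
      · rw [htdef, if_pos h, hYc j, if_pos h.symm]
        have := hkδ h
        omega
      · rw [htdef, if_neg h, hYc j, if_neg (fun hc => h hc.symm)]
        omega
    set X₂ : (i : Fin ℓ) → Finset (Fin (m i - (X i).card)) := fun _ => ∅ with hX₂
    set Y₂ : (i : Fin ℓ) → Finset (Fin (n i - (Y i).card)) := fun i =>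
      if i < j then Finset.univ
      else if h : i = j then Finset.attachFin (Finset.range t)
        (fun x hx => by subst h; exact lt_of_lt_of_le (Finset.mem_range.1 hx) ht)
      else ∅ with hY₂
    have hY₂card : ∀ i, (Y₂ i).card =
        if i < j then n i - (Y i).card else if i = j then t else 0 := by
      intro i
      by_cases h1 : i < j
      · simp [hY₂, h1]
      · by_cases h2 : i = j
        · subst h2
          simp [hY₂, h1, Finset.card_attachFin]
        · simp [hY₂, h1, h2]
    have msize2 : mcSize X₂ Y₂ = d - 1 := by
      have hterm : ∀ i : Fin ℓ, (X₂ i).card + (Y₂ i).card =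
          (if i < j then n i - (Y i).card else if i = j then t else 0) := by
        intro i; rw [hY₂card]; simp [hX₂]
      have hsum : mcSize X₂ Y₂ = (∑ i ∈ Finset.Iio j, (n i - (Y i).card)) + t := by
        unfold mcSize
        simp only [hterm]
        rw [sum_split j]
        have e1 : ∀ i ∈ Finset.Iio j, (if i < j then n i - (Y i).card else if i = j then t else 0)
            = n i - (Y i).card := by intro i hi; rw [if_pos (Finset.mem_Iio.1 hi)]
        have e2 : (if j < j then n j - (Y j).card else if j = j then t else 0) = t := by simp
        have e3 : ∀ i ∈ Finset.Ioi j, (if i < j then n i - (Y i).card else if i = j then t else 0)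
            = 0 := by
          intro i hi
          have h1 := Finset.mem_Ioi.1 hi
          rw [if_neg (by exact not_lt.2 h1.le), if_neg (by exact fun h => absurd h.symm h1.ne)]
        rw [Finset.sum_congr rfl e1, e2, Finset.sum_congr rfl e3]
        simp
      rw [hsum]
      have hsub : ∑ i ∈ Finset.Iio j, (n i - (Y i).card)
          = (∑ i ∈ Finset.Iio j, n i) - (∑ i ∈ Finset.Iio j, (Y i).card) := by
        refine Finset.sum_tsub_distrib _ fun i _ => ?_
        rw [hYc]
        have := hn i
        split <;> omega
      have hYsum : ∑ i ∈ Finset.Iio j, (Y i).card = if k < j then 1 else 0 := by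
        by_cases h : k < j
        · rw [if_pos h]
          rw [Finset.sum_eq_single_of_mem k (Finset.mem_Iio.2 h)
            (fun i _ hik => by rw [hYc, if_neg hik])]
          rw [hYc, if_pos rfl]
        · rw [if_neg h]
          refine Finset.sum_eq_zero fun i hi => ?_
          rw [hYc, if_neg]
          intro hik
          exact h (hik ▸ Finset.mem_Iio.1 hi)
      rw [hsub, hYsum]
      by_cases h : k = j
      · have hkj' : ¬ k < j := by rw [h]; exact lt_irrefl j
        rw [if_neg hkj', htdef, if_pos h]
        have := hkδ h
        omega
      · have hkj' : k < j := lt_of_le_of_ne hkj h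
        rw [if_pos hkj', htdef, if_neg h]
        have hnk : 1 ≤ ∑ i ∈ Finset.Iio j, n i :=
          le_trans (hn k) (Finset.single_le_sum (fun i _ => Nat.zero_le _) (Finset.mem_Iio.2 hkj'))
        omega
    have hinj2 : Set.InjOn (projMC X₂ Y₂) (punctureMC 𝒞 X Y : Set (MCSpace F (fun i => m i - (X i).card) (fun i => n i - (Y i).card))) := by
      intro Ca hCa Da hDa hab
      by_contra hne2
      have h1 : dMC (punctureMC 𝒞 X Y : Set (MCSpace F (fun i => m i - (X i).card) (fun i => n i - (Y i).card))) ≤ wtMC (Ca - Da) :=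
        Nat.sInf_le ⟨Ca, hCa, Da, hDa, hne2, rfl⟩
      have h0 : projMC X₂ Y₂ (Ca - Da) = 0 := by rw [projMC_sub, hab, sub_self]
      have h2 : wtMC (Ca - Da) ≤ d - 1 := by
        have := wtMC_le_of_cover (isMultiCover_of_projMC_eq_zero h0)
        rwa [msize2] at this
      omega
    have hle : (punctureMC 𝒞 X Y : Set (MCSpace F (fun i => m i - (X i).card) (fun i => n i - (Y i).card))).ncard
        ≤ Fintype.card F ^ (∑ i, (m i - (X i).card - (X₂ i).card)
            * (n i - (Y i).card - (Y₂ i).card)) := by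
      rw [← Set.ncard_image_of_injOn hinj2, ← card_MCSpace]
      refine le_trans (Set.ncard_le_ncard (Set.subset_univ _) (Set.toFinite _)) ?_
      rw [Set.ncard_univ, Nat.card_eq_fintype_card]
    have hT : (∑ i, (m i - (X i).card - (X₂ i).card) * (n i - (Y i).card - (Y₂ i).card))
        = m j * (n j - (δ + 1)) + S := by
      have hterm : ∀ i : Fin ℓ, (m i - (X i).card - (X₂ i).card)
          * (n i - (Y i).card - (Y₂ i).card)
          = m i * (n i - (Y i).card - (Y₂ i).card) := by
        intro i
        have h0 : (X₂ i).card = 0 := by simp [hX₂]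
        rw [h0, Nat.sub_zero, hXc i, Nat.sub_zero]
      simp only [hterm]
      rw [sum_split j]
      have e1 : ∀ i ∈ Finset.Iio j, m i * (n i - (Y i).card - (Y₂ i).card) = 0 := by
        intro i hi
        rw [hY₂card, if_pos (Finset.mem_Iio.1 hi)]
        simp
      have e2 : m j * (n j - (Y j).card - (Y₂ j).card) = m j * (n j - (δ + 1)) := by
        rw [hY₂card, if_neg (lt_irrefl j), if_pos rfl]
        congr 1
        by_cases h : k = j
        · rw [hYc, if_pos h.symm, htdef, if_pos h]
          omega
        · rw [hYc, if_neg (fun hc => h hc.symm), htdef, if_neg h]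
          omega
      have e3 : ∀ i ∈ Finset.Ioi j, m i * (n i - (Y i).card - (Y₂ i).card) = m i * n i := by
        intro i hi
        have h1 := Finset.mem_Ioi.1 hi
        have hik : i ≠ k := fun hc => absurd (hc ▸ h1) (not_lt.2 hkj)
        rw [hY₂card, if_neg (not_lt.2 h1.le), if_neg (fun h => absurd h.symm h1.ne),
          hYc, if_neg hik]
        simp
      rw [Finset.sum_congr rfl e1, e2, Finset.sum_congr rfl e3]
      simp
      exact hS.symm
    rw [hT] at hle
    rw [hcard𝒫, hMMCD, hIci] at hle
    have harith : m j * (n j - (δ + 1)) + S < m j * n j + S - m j * δ := by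
      have e1 : m j * (n j - (δ + 1)) = m j * n j - (m j * δ + m j) := by
        rw [Nat.mul_sub, Nat.mul_succ]
      have h3 : m j * δ + m j ≤ m j * n j := by
        have := Nat.mul_le_mul_left (m j) hδnj
        rwa [Nat.mul_succ] at this
      have h4 := hm j
      omega
    have hlt := Nat.pow_lt_pow_right hq harith
    omega
  have hdMC : dMC (punctureMC 𝒞 X Y : Set (MCSpace F (fun i => m i - (X i).card) (fun i => n i - (Y i).card))) = d - 1 := le_antisymm hup hlow
  -- dimension equality
  have hrank : Module.finrank F (punctureMC 𝒞 X Y) = Module.finrank F 𝒞 := by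
    let g : 𝒞 →ₗ[F] MCSpace F (fun i => m i - (X i).card) (fun i => n i - (Y i).card) :=
      (projMCLin X Y).comp 𝒞.subtype
    have hker : Function.Injective g := by
      rw [← LinearMap.ker_eq_bot (f := g)] at *
      · ext c
        simp only [LinearMap.mem_ker, Submodule.mem_bot]
        constructor
        · intro hc
          have h0 : projMC X Y ((c : MCSpace F m n)) = projMC X Y (0 : MCSpace F m n) := by
            have hz : projMC X Y (0 : MCSpace F m n) = 0 := map_zero (projMCLin (F := F) X Y)
            rw [hz]
            exact hc
          exact Subtype.ext (hπ c c.2 0 (Submodule.zero_mem 𝒞) h0)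
        · intro hc; rw [hc]; exact map_zero g
    have hrange : LinearMap.range g = punctureMC 𝒞 X Y := by
      rw [punctureMC, LinearMap.range_comp, Submodule.range_subtype]
    have e := LinearEquiv.ofInjective g hker
    rw [hrange] at e
    exact (LinearEquiv.finrank_eq e).symm
  refine ⟨?_, hrank, hdMC⟩
  refine ⟨j, if k = j then δ - 1 else δ, ?_, ?_, ?_⟩
  · show (if k = j then δ - 1 else δ) ≤ n j - (Y j).card - 1
    rw [hYc j]
    by_cases h : k = j
    · rw [if_pos h, if_pos h.symm]
      have := hkδ h
      omega
    · rw [if_neg h, if_neg (fun hc => h hc.symm)]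
      omega
  · show dMC (punctureMC 𝒞 X Y : Set (MCSpace F (fun i => m i - (X i).card)
        (fun i => n i - (Y i).card))) - 1
      = (∑ i ∈ Finset.Iio j, (n i - (Y i).card)) + (if k = j then δ - 1 else δ)
    rw [hdMC]
    have hsub : ∑ i ∈ Finset.Iio j, (n i - (Y i).card)
        = (∑ i ∈ Finset.Iio j, n i) - (∑ i ∈ Finset.Iio j, (Y i).card) := by
      refine Finset.sum_tsub_distrib _ fun i _ => ?_
      rw [hYc]
      have := hn i
      split <;> omega
    have hYsum : ∑ i ∈ Finset.Iio j, (Y i).card = if k < j then 1 else 0 := by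
      by_cases h : k < j
      · rw [if_pos h]
        rw [Finset.sum_eq_single_of_mem k (Finset.mem_Iio.2 h)
          (fun i _ hik => by rw [hYc, if_neg hik])]
        rw [hYc, if_pos rfl]
      · rw [if_neg h]
        refine Finset.sum_eq_zero fun i hi => ?_
        rw [hYc, if_neg]
        intro hik
        exact h (hik ▸ Finset.mem_Iio.1 hi)
    rw [hsub, hYsum]
    by_cases h : k = j
    · have hkj' : ¬ k < j := by rw [h]; exact lt_irrefl j
      rw [if_neg hkj', if_pos h]
      have := hkδ h
      omega
    · have hkj' : k < j := lt_of_le_of_ne hkj h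
      rw [if_pos hkj', if_neg h]
      have hnk : 1 ≤ ∑ i ∈ Finset.Iio j, n i :=
        le_trans (hn k) (Finset.single_le_sum (fun i _ => Nat.zero_le _) (Finset.mem_Iio.2 hkj'))
      omega
  · show (punctureMC 𝒞 X Y : Set (MCSpace F (fun i => m i - (X i).card)
        (fun i => n i - (Y i).card))).ncard = Fintype.card F
      ^ ((∑ i ∈ Finset.Ici j, (m i - (X i).card) * (n i - (Y i).card))
        - (m j - (X j).card) * (if k = j then δ - 1 else δ))
    rw [hcard𝒫, hMMCD]
    congr 1
    simp only [hXc, Nat.sub_zero]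
    rw [sum_Ici_split j (fun i => m i * n i), sum_Ici_split j]
    have e3 : ∑ i ∈ Finset.Ioi j, m i * (n i - (Y i).card) = ∑ i ∈ Finset.Ioi j, m i * n i := by
      refine Finset.sum_congr rfl fun i hi => ?_
      have h1 := Finset.mem_Ioi.1 hi
      have hik : i ≠ k := fun hc => absurd (hc ▸ h1) (not_lt.2 hkj)
      rw [hYc, if_neg hik]
      simp
    rw [e3]
    by_cases h : k = j
    · rw [if_pos h, hYc j, if_pos h.symm]
      have hkd := hkδ h
      have e1 : m j * (n j - 1) = m j * n j - m j := by rw [Nat.mul_sub, Nat.mul_one]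
      have e2 : m j * (δ - 1) = m j * δ - m j := by rw [Nat.mul_sub, Nat.mul_one]
      have h3 : m j * δ ≤ m j * n j := Nat.mul_le_mul_left _ (by omega)
      have h4 : m j ≤ m j * δ := by
        calc m j = m j * 1 := (Nat.mul_one _).symm
        _ ≤ m j * δ := Nat.mul_le_mul_left _ hkd
      rw [e1, e2]
      omega
    · rw [if_neg h, hYc j, if_neg (fun hc => h hc.symm)]
      simp
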